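/- arXiv:1304.5024 — 6 statements merged into one kernel-verified Lean document; each statement's English description precedes it below -/
import Mathlib

section
/- Let n ≥ 1 and let (i_1, …, i_ℓ) be a composition of n (a list of positive integers with i_1 + … + i_ℓ = n). Then the number of anti-lexicographically ordered partitions (λ_1, …, λ_ℓ) of {1, …, n} with |λ_r| = i_r for every r = 1, …, ℓ equals N_{(i_1,…,i_ℓ)} = C(i_1+…+i_ℓ−1, i_ℓ−1) · C(i_1+…+i_{ℓ−1}−1, i_{ℓ−1}−1) ⋯ C(i_1+i_2−1, i_2−1), where C denotes the binomial coefficient (for ℓ = 1 the product is empty and equals 1). -/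
/-- A list `L = (λ₁, …, λ_ℓ)` of pairwise disjoint nonempty finite subsets of `ℕ`
whose union is `S` is an *anti-lexicographically ordered partition* of `S` if for
every `r` the maximum of `λ₁ ∪ ⋯ ∪ λ_r` belongs to `λ_r`. -/
def IsALOP (S : Finset ℕ) (L : List (Finset ℕ)) : Prop :=
  (∀ B ∈ L, B.Nonempty) ∧ List.Pairwise Disjoint L ∧
    L.foldr (· ∪ ·) ∅ = S ∧
    ∀ r, (hr : r < L.length) → ∃ m ∈ L.get ⟨r, hr⟩,
      ∀ a ∈ (L.take (r + 1)).foldr (· ∪ ·) ∅, a ≤ m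

/-- `Ncoef [i₁, …, i_ℓ] = C(i₁+⋯+i_ℓ−1, i_ℓ−1) ⋯ C(i₁+i₂−1, i₂−1)`,
with the empty product (ℓ ≤ 1) equal to 1. -/
def Ncoef : List ℕ → ℕ
  | [] => 1
  | [_] => 1
  | i :: j :: rest => Nat.choose (i + j - 1) (j - 1) * Ncoef ((i + j) :: rest)
termination_by l => l.length

/-!
Merging the first two blocks of an anti-lexicographically ordered partition of type
`(i, j, i₃, …)` gives one of type `(i + j, i₃, …)`. Conversely, a block `μ` of size `i + j`
splits admissibly into `(μ \ B, B)` exactly when `B` contains `max μ`, so every partition of the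
coarser type has `C(i + j - 1, j - 1)` preimages, one for each `(j - 1)`-subset of `μ \ {max μ}`.
Induction on the length of the composition gives the product formula.
-/

open Finset

theorem subset_foldr_union {L : List (Finset ℕ)} {B : Finset ℕ} (h : B ∈ L) :
    B ⊆ L.foldr (· ∪ ·) ∅ := by
  induction L with
  | nil => simp at h
  | cons A L ih =>
    rcases List.mem_cons.1 h with rfl | h
    · exact subset_union_left
    · exact (ih h).trans subset_union_right

theorem foldr_union_take_cons_cons (a b : Finset ℕ) (rest : List (Finset ℕ)) (r : ℕ) :
    ((a :: b :: rest).take (r + 2)).foldr (· ∪ ·) ∅ =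
      (((a ∪ b) :: rest).take (r + 1)).foldr (· ∪ ·) ∅ := by
  simp [List.take_succ_cons, union_assoc]

theorem isALOP_nil_iff {S : Finset ℕ} : IsALOP S [] ↔ S = ∅ := by
  simp [IsALOP, eq_comm]

theorem isALOP_singleton_iff {S B : Finset ℕ} : IsALOP S [B] ↔ B = S ∧ S.Nonempty := by
  constructor
  · rintro ⟨hne, -, hunion, -⟩
    simp only [List.foldr, union_empty] at hunion
    exact ⟨hunion, hunion ▸ hne B (List.mem_singleton_self B)⟩
  · rintro ⟨rfl, hB⟩
    refine ⟨by simpa using hB, by simp, by simp, ?_⟩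
    rintro (_ | _) hr
    · exact ⟨B.max' hB, max'_mem _ _, fun x hx => le_max' _ _ (by simpa using hx)⟩
    · simp at hr

theorem isALOP_cons_cons_iff {S a b : Finset ℕ} {rest : List (Finset ℕ)} :
    IsALOP S (a :: b :: rest) ↔
      IsALOP S ((a ∪ b) :: rest) ∧ a.Nonempty ∧ Disjoint a b ∧ ∃ m ∈ b, ∀ x ∈ a ∪ b, x ≤ m := by
  have htake := foldr_union_take_cons_cons a b rest
  simp only [IsALOP, List.pairwise_cons, List.mem_cons, forall_eq_or_imp,
    disjoint_union_left, List.foldr_cons, ← union_assoc]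
  constructor
  · rintro ⟨⟨ha, hb, hne⟩, ⟨⟨hab, hda⟩, hdb, hdisj⟩, hunion, hmax⟩
    obtain ⟨m, hm, hle⟩ := hmax 1 (by simp)
    have htop : ∀ x ∈ a ∪ b, x ≤ m := fun x hx => hle x (by simpa using hx)
    refine ⟨⟨⟨ha.mono subset_union_left, hne⟩, ⟨fun B hB => ⟨hda B hB, hdb B hB⟩, hdisj⟩,
      hunion, ?_⟩, ha, hab, m, hm, htop⟩
    rintro (_ | k) hk
    · exact ⟨m, mem_union_right _ hm, fun x hx => htop x (by simpa using hx)⟩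
    · obtain ⟨m', hm', hle'⟩ := hmax (k + 2) (by simpa using hk)
      exact ⟨m', hm', by rwa [← htake]⟩
  · rintro ⟨⟨⟨-, hne⟩, ⟨hd, hdisj⟩, hunion, hmax⟩, ha, hab, m, hm, htop⟩
    refine ⟨⟨ha, ⟨m, hm⟩, hne⟩, ⟨⟨hab, fun B hB => (hd B hB).1⟩, fun B hB => (hd B hB).2, hdisj⟩,
      hunion, ?_⟩
    rintro (_ | _ | k) hk
    · exact ⟨a.max' ha, max'_mem _ _, fun x hx => le_max' _ _ (by simpa using hx)⟩
    · exact ⟨m, hm, fun x hx => htop x (by simpa using hx)⟩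
    · obtain ⟨m', hm', hle'⟩ := hmax (k + 1) (by simpa using hk)
      exact ⟨m', hm', by rwa [htake]⟩

theorem finite_setOf_isALOP (S : Finset ℕ) (c : List ℕ) :
    {L : List (Finset ℕ) | IsALOP S L ∧ L.map card = c}.Finite := by
  refine ((List.finite_length_eq {B // B ∈ S.powerset} c.length).image
    (List.map Subtype.val)).subset ?_
  rintro L ⟨⟨-, -, hunion, -⟩, rfl⟩
  refine ⟨L.attach.map fun B => ⟨B.1, mem_powerset.2 (hunion ▸ subset_foldr_union B.2)⟩, ?_, ?_⟩
    <;> simp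

noncomputable def alopsOfSizes (S : Finset ℕ) (c : List ℕ) : Finset (List (Finset ℕ)) :=
  (finite_setOf_isALOP S c).toFinset

@[simp]
theorem mem_alopsOfSizes {S : Finset ℕ} {c : List ℕ} {L : List (Finset ℕ)} :
    L ∈ alopsOfSizes S c ↔ IsALOP S L ∧ L.map card = c :=
  Set.Finite.mem_toFinset _

def mergeHead : List (Finset ℕ) → List (Finset ℕ)
  | a :: b :: rest => (a ∪ b) :: rest
  | L => L

theorem exists_eq_cons_cons_of_mem_alopsOfSizes {S : Finset ℕ} {i j : ℕ} {sizes : List ℕ}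
    {L : List (Finset ℕ)} (hL : L ∈ alopsOfSizes S (i :: j :: sizes)) :
    ∃ a b rest, L = a :: b :: rest ∧ IsALOP S (a :: b :: rest) ∧ a.card = i ∧ b.card = j ∧
      rest.map card = sizes := by
  rcases L with _ | ⟨a, _ | ⟨b, rest⟩⟩ <;> simp_all

theorem mergeHead_mem_alopsOfSizes {S : Finset ℕ} {i j : ℕ} {sizes : List ℕ}
    {L : List (Finset ℕ)} (hL : L ∈ alopsOfSizes S (i :: j :: sizes)) :
    mergeHead L ∈ alopsOfSizes S ((i + j) :: sizes) := by
  obtain ⟨a, b, rest, rfl, hALOP, rfl, rfl, rfl⟩ := exists_eq_cons_cons_of_mem_alopsOfSizes hL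
  obtain ⟨hmerged, -, hab, -⟩ := isALOP_cons_cons_iff.1 hALOP
  simpa [mergeHead, hmerged] using card_union_of_disjoint hab

theorem card_filter_mergeHead_eq {S μ : Finset ℕ} {rest : List (Finset ℕ)} {i j : ℕ}
    {sizes : List ℕ} (hi : 0 < i) (hj : 0 < j)
    (hM : μ :: rest ∈ alopsOfSizes S ((i + j) :: sizes)) :
    {L ∈ alopsOfSizes S (i :: j :: sizes) | mergeHead L = μ :: rest}.card =
      (i + j - 1).choose (j - 1) := by
  simp only [mem_alopsOfSizes, List.map_cons, List.cons.injEq] at hM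
  obtain ⟨hM, hμ, hrest⟩ := hM
  have hμne : μ.Nonempty := hM.1 μ (List.mem_cons_self ..)
  set m := μ.max' hμne
  have hmμ : m ∈ μ := max'_mem _ _
  have hmT {T : Finset ℕ} (hT : T ∈ (μ.erase m).powersetCard (j - 1)) : m ∉ T :=
    fun h => (mem_erase.1 ((mem_powersetCard.1 hT).1 h)).1 rfl
  rw [← hμ, ← card_erase_of_mem hmμ, ← card_powersetCard]
  symm
  refine card_bij (fun T _ => (μ \ insert m T) :: insert m T :: rest) ?_ ?_ ?_
  · intro T hT
    have hBμ : insert m T ⊆ μ :=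
      insert_subset hmμ ((mem_powersetCard.1 hT).1.trans (erase_subset _ _))
    have hBcard : (insert m T).card = j := by
      rw [card_insert_of_notMem (hmT hT), (mem_powersetCard.1 hT).2]; omega
    have hAcard : (μ \ insert m T).card = i := by
      rw [card_sdiff_of_subset hBμ, hμ, hBcard]; omega
    rw [mem_filter, mem_alopsOfSizes, isALOP_cons_cons_iff]
    simp only [List.map_cons, mergeHead, sdiff_union_of_subset hBμ, hAcard, hBcard, hrest, hM]
    refine ⟨⟨⟨trivial, card_pos.1 (hAcard ▸ hi), disjoint_sdiff_self_left, m, mem_insert_self _ _,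
      fun x hx => le_max' μ x hx⟩, trivial⟩, trivial⟩
  · intro T₁ hT₁ T₂ hT₂ h
    simp only [List.cons.injEq] at h
    rw [← erase_insert (hmT hT₁), ← erase_insert (hmT hT₂), h.2.1]
  · intro L hL
    rw [mem_filter] at hL
    obtain ⟨a, b, rest', rfl, hALOP, -, hb, -⟩ := exists_eq_cons_cons_of_mem_alopsOfSizes hL.1
    obtain ⟨-, -, hab, m', hm', hle⟩ := isALOP_cons_cons_iff.1 hALOP
    simp only [mergeHead, List.cons.injEq] at hL
    obtain ⟨rfl, rfl⟩ := hL.2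
    obtain rfl : m' = m := le_antisymm (le_max' _ _ (mem_union_right _ hm')) (hle m hmμ)
    refine ⟨b.erase m, mem_powersetCard.2 ⟨erase_subset_erase _ subset_union_right, ?_⟩, ?_⟩
    · rw [card_erase_of_mem hm', hb]
    · rw [insert_erase hm', union_sdiff_cancel_right hab]

theorem card_alopsOfSizes_cons_cons (S : Finset ℕ) {i j : ℕ} (hi : 0 < i) (hj : 0 < j)
    (sizes : List ℕ) :
    (alopsOfSizes S (i :: j :: sizes)).card =
      (i + j - 1).choose (j - 1) * (alopsOfSizes S ((i + j) :: sizes)).card := by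
  rw [card_eq_sum_card_fiberwise fun L hL => mergeHead_mem_alopsOfSizes hL,
    sum_congr rfl fun M hM => ?_, sum_const, smul_eq_mul, mul_comm]
  obtain ⟨μ, rest, rfl⟩ : ∃ μ rest, M = μ :: rest := by
    rcases M with _ | ⟨μ, rest⟩
    · simp at hM
    · exact ⟨μ, rest, rfl⟩
  exact card_filter_mergeHead_eq hi hj hM

theorem card_alopsOfSizes (S : Finset ℕ) (c : List ℕ) (hpos : ∀ i ∈ c, 0 < i)
    (hsum : c.sum = S.card) : (alopsOfSizes S c).card = Ncoef c := by
  induction c using Ncoef.induct with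
  | case1 =>
    obtain rfl : S = ∅ := card_eq_zero.1 (by simpa using hsum.symm)
    rw [Ncoef, card_eq_one]
    exact ⟨[], by ext L; rcases L with _ | ⟨B, L⟩ <;> simp [isALOP_nil_iff]⟩
  | case2 i =>
    obtain rfl : i = S.card := by simpa using hsum
    have hS : S.Nonempty := card_pos.1 (by simpa using hpos)
    rw [Ncoef, card_eq_one]
    refine ⟨[S], ?_⟩
    ext L
    rcases L with _ | ⟨B, _ | ⟨B', L⟩⟩ <;> simp +contextual [isALOP_singleton_iff, hS]
  | case3 i j sizes ih =>
    simp only [List.mem_cons, forall_eq_or_imp] at hpos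
    obtain ⟨hi, hj, hsizes⟩ := hpos
    rw [card_alopsOfSizes_cons_cons S hi hj, Ncoef,
      ih (by simpa [hi] using hsizes) (by simpa [add_assoc] using hsum)]

theorem stmt0_general (n : ℕ) (c : List ℕ)
    (hpos : ∀ i ∈ c, 0 < i) (hsum : c.sum = n) :
    {L : List (Finset ℕ) | IsALOP (Finset.Icc 1 n) L ∧ L.map Finset.card = c}.ncard
      = Ncoef c := by
  rw [Set.ncard_eq_toFinset_card _ (finite_setOf_isALOP _ c)]
  exact card_alopsOfSizes _ c hpos (by simp [hsum])

/-- for a composition `(i₁, …, i_ℓ)` of `n ≥ 1`, the number of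
anti-lexicographically ordered partitions `(λ₁, …, λ_ℓ)` of `{1, …, n}` with
`|λ_r| = i_r` for all `r` is `N_{(i₁, …, i_ℓ)}`. -/
theorem stmt0 (n : ℕ) (hn : 1 ≤ n) (c : List ℕ)
    (hpos : ∀ i ∈ c, 0 < i) (hsum : c.sum = n) :
    {L : List (Finset ℕ) | IsALOP (Finset.Icc 1 n) L ∧ L.map Finset.card = c}.ncard
      = Ncoef c :=
  stmt0_general n c hpos hsum
end

section
/- Let n ≥ 1. For λ = (λ_1, …, λ_ℓ) ∈ P_n and 0 ≤ m ≤ ℓ, let λ⁺ be the list obtained from λ by replacing every element j of every block by j + 1, and define λ^[m] as follows: for 1 ≤ m ≤ ℓ, λ^[m] is λ⁺ with the element 1 inserted into its m-th block; λ^[0] is λ⁺ with the singleton block {1} prepended. Then: (a) every λ^[m] is an anti-lexicographically ordered partition of {1, …, n+1}; and (b) the map (λ, m) ↦ λ^[m] is a bijection from the set of pairs {(λ, m) : λ ∈ P_n, 0 ≤ m ≤ length(λ)} onto P_{n+1}. -/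
/-- `shiftUp L = L⁺` : increase every element of every block of `L` by 1. -/
def shiftUp (L : List (Finset ℕ)) : List (Finset ℕ) :=
  L.map (Finset.image (· + 1))

/-- The derived partition `λ^[m]`: for `m = 0`, prepend the singleton block `{1}` to `λ⁺`;
for `1 ≤ m`, insert the element `1` into the `m`-th block of `λ⁺`. -/
def derive (L : List (Finset ℕ)) (m : ℕ) : List (Finset ℕ) :=
  if m = 0 then {1} :: shiftUp L
  else (shiftUp L).set (m - 1) (insert 1 ((shiftUp L).getD (m - 1) ∅))

/-!
Read the anti-lexicographic condition as "the block maxima increase along the list".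
The element `1` is smaller than every element of `λ⁺`, so inserting it into a
block of `λ⁺` changes no block maximum, and a new block `{1}` can only stand in front. Hence
every `λ^[m]` is anti-lexicographic, and conversely deleting `1` from a partition in `P_{n+1}`
and shifting down gives the unique preimage: `m = 0` if `{1}` is a block, and otherwise `m - 1`
is the index of the block containing `1`.
-/

lemma mem_foldr_union {L : List (Finset ℕ)} {a : ℕ} :
    a ∈ L.foldr (· ∪ ·) ∅ ↔ ∃ B ∈ L, a ∈ B := by
  induction L with
  | nil => simp
  | cons B T ih => simp [ih]

lemma isALOP_iff {S : Finset ℕ} {L : List (Finset ℕ)} : IsALOP S L ↔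
    (∀ B ∈ L, B.Nonempty) ∧ L.Pairwise Disjoint ∧ (∀ a, a ∈ S ↔ ∃ B ∈ L, a ∈ B) ∧
      L.Pairwise (fun B C => B.max ≤ C.max) := by
  unfold IsALOP
  refine and_congr_right fun hne => and_congr_right fun _ => and_congr ?_ ?_
  · simp only [Finset.ext_iff, mem_foldr_union]
    exact forall_congr' fun a => Iff.comm
  · simp only [List.get_eq_getElem, mem_foldr_union, List.mem_take_iff_getElem,
      List.pairwise_iff_getElem]
    constructor
    · intro h i j hi hj hij
      obtain ⟨m, hm, hmax⟩ := h j hj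
      refine Finset.max_le fun b hb => le_trans ?_ (Finset.le_max hm)
      exact WithBot.coe_le_coe.2 (hmax b ⟨_, ⟨i, by omega, rfl⟩, hb⟩)
    · intro h r hr
      have hr' := hne _ (List.getElem_mem hr)
      refine ⟨_, Finset.max'_mem _ hr', ?_⟩
      rintro b ⟨_, ⟨i, hi, rfl⟩, hb⟩
      rw [← WithBot.coe_le_coe, Finset.coe_max']
      refine (Finset.le_max hb).trans ?_
      rcases (show i ≤ r by omega).lt_or_eq with hir | rfl
      · exact h i r _ hr hir
      · exact le_rfl

lemma IsALOP.subset {S : Finset ℕ} {L : List (Finset ℕ)} (h : IsALOP S L) {B : Finset ℕ}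
    (hB : B ∈ L) : B ⊆ S :=
  fun _ hb => ((isALOP_iff.1 h).2.2.1 _).2 ⟨B, hB, hb⟩

lemma Monotone.max_finset_image {α β : Type*} [LinearOrder α] [LinearOrder β]
    {f : α → β} (hf : Monotone f) (s : Finset α) : (s.image f).max = s.max.map f := by
  induction s using Finset.induction_on with
  | empty => rfl
  | insert a s _ ih =>
    rw [Finset.image_insert, Finset.max_insert, Finset.max_insert, ih, hf.withBot_map.map_max]
    rfl

lemma isALOP_map_image_iff {f : ℕ → ℕ} (hf : StrictMono f) {S : Finset ℕ}
    {L : List (Finset ℕ)} : IsALOP (S.image f) (L.map (Finset.image f)) ↔ IsALOP S L := by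
  simp only [isALOP_iff, List.forall_mem_map, List.pairwise_map, Finset.image_nonempty,
    Finset.disjoint_image hf.injective, hf.monotone.max_finset_image,
    WithBot.map_le_iff _ hf.le_iff_le]
  refine and_congr_right fun _ => and_congr_right fun _ => and_congr_left fun _ => ?_
  constructor
  · intro h a
    simpa [hf.injective.eq_iff] using h (f a)
  · intro h b
    simp only [Finset.mem_image, h, List.mem_map]
    grind

lemma List.Pairwise.append_cons_of_rel {α : Type*} {R : α → α → Prop} {L₁ L₂ : List α}
    {B B' : α} (h : (L₁ ++ B :: L₂).Pairwise R) (h₁ : ∀ A ∈ L₁, R A B → R A B')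
    (h₂ : ∀ C ∈ L₂, R B C → R B' C) : (L₁ ++ B' :: L₂).Pairwise R := by
  simp only [List.pairwise_append, List.pairwise_cons, List.mem_cons] at h ⊢
  grind

section InsertMin

variable {a : ℕ} {S : Finset ℕ}

lemma isALOP_singleton_cons_iff (ha : ∀ b ∈ S, a < b) {L : List (Finset ℕ)} :
    IsALOP (insert a S) ({a} :: L) ↔ IsALOP S L := by
  constructor
  · rw [isALOP_iff, isALOP_iff]
    rintro ⟨hne, hdisj, hunion, hmax⟩
    rw [List.pairwise_cons] at hdisj hmax
    refine ⟨fun B hB => hne B (List.mem_cons_of_mem _ hB), hdisj.2, fun b => ?_, hmax.2⟩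
    have ha_notMem : ∀ B ∈ L, a ∉ B := fun B hB =>
      Finset.disjoint_singleton_left.1 (hdisj.1 B hB)
    have := hunion b
    simp only [Finset.mem_insert, List.mem_cons, exists_eq_or_imp, Finset.mem_singleton] at this
    grind
  · intro h
    have ha_lt : ∀ C ∈ L, ∀ c ∈ C, a < c := fun C hC c hc => ha c (h.subset hC hc)
    rw [isALOP_iff] at h ⊢
    obtain ⟨hne, hdisj, hunion, hmax⟩ := h
    refine ⟨?_, List.pairwise_cons.2 ⟨?_, hdisj⟩, fun b => ?_, List.pairwise_cons.2 ⟨?_, hmax⟩⟩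
    · simpa using hne
    · exact fun C hC => Finset.disjoint_singleton_left.2 fun haC => (ha_lt C hC a haC).false
    · simp [hunion]
    · intro C hC
      obtain ⟨c, hc⟩ := hne C hC
      rw [Finset.max_singleton]
      exact (WithBot.coe_le_coe.2 (ha_lt C hC c hc).le).trans (Finset.le_max hc)

variable {L₁ L₂ : List (Finset ℕ)} {B : Finset ℕ}

lemma IsALOP.append_insert_cons (h : IsALOP S (L₁ ++ B :: L₂)) (ha : ∀ b ∈ S, a < b) :
    IsALOP (insert a S) (L₁ ++ insert a B :: L₂) := by
  have ha_lt : ∀ C ∈ L₁ ++ B :: L₂, ∀ c ∈ C, a < c := fun C hC c hc => ha c (h.subset hC hc)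
  rw [isALOP_iff] at h ⊢
  obtain ⟨hne, hdisj, hunion, hmax⟩ := h
  simp only [List.perm_middle.mem_iff, List.mem_cons, exists_eq_or_imp, forall_eq_or_imp]
    at hne hunion ⊢
  refine ⟨⟨Finset.insert_nonempty a B, hne.2⟩, hdisj.append_cons_of_rel ?_ ?_, fun b => ?_,
    hmax.append_cons_of_rel ?_ ?_⟩
  · exact fun A hA hAB => Finset.disjoint_insert_right.2
      ⟨fun haA => (ha_lt A (by simp [hA]) a haA).false, hAB⟩
  · exact fun C hC hBC => Finset.disjoint_insert_left.2
      ⟨fun haC => (ha_lt C (by simp [hC]) a haC).false, hBC⟩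
  · rw [Finset.mem_insert, Finset.mem_insert, hunion, or_assoc]
  · exact fun A _ hAB => hAB.trans (Finset.max_mono (Finset.subset_insert a B))
  · intro C hC hBC
    obtain ⟨c, hc⟩ := hne.2 C (by simp [hC])
    rw [Finset.max_insert]
    exact max_le ((WithBot.coe_le_coe.2 (ha_lt C (by simp [hC]) c hc).le).trans
      (Finset.le_max hc)) hBC

lemma IsALOP.append_erase_cons (h : IsALOP (insert a S) (L₁ ++ B :: L₂))
    (ha : ∀ b ∈ S, a < b) (haB : a ∈ B) (hB : B ≠ {a}) : IsALOP S (L₁ ++ B.erase a :: L₂) := by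
  have haS : a ∉ S := fun haS => (ha a haS).false
  obtain ⟨x, hxB, hxa⟩ : ∃ x ∈ B, x ≠ a := by
    by_contra! hall
    exact hB (Finset.eq_singleton_iff_unique_mem.2 ⟨haB, hall⟩)
  have hax : a < x := by
    have := h.subset (by simp) hxB
    rw [Finset.mem_insert] at this
    exact ha x (this.resolve_left hxa)
  have hx_erase : x ∈ B.erase a := Finset.mem_erase.2 ⟨hxa, hxB⟩
  have hmax_erase : (B.erase a).max = B.max := by
    rw [← Finset.insert_erase haB, Finset.erase_insert (Finset.notMem_erase a B), Finset.max_insert]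
    exact (max_eq_right ((WithBot.coe_le_coe.2 hax.le).trans (Finset.le_max hx_erase))).symm
  rw [isALOP_iff] at h ⊢
  obtain ⟨hne, hdisj, hunion, hmax⟩ := h
  have ha_notMem : ∀ C ∈ L₁ ++ L₂, a ∉ C := fun C hC =>
    Finset.disjoint_left.1 ((List.pairwise_cons.1
      ((List.perm_middle.pairwise_iff fun h => h.symm).1 hdisj)).1 C hC) haB
  simp only [List.perm_middle.mem_iff, List.mem_cons, exists_eq_or_imp, forall_eq_or_imp]
    at hne hunion ⊢
  refine ⟨⟨⟨x, hx_erase⟩, hne.2⟩, hdisj.append_cons_of_rel ?_ ?_, fun b => ?_,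
    hmax.append_cons_of_rel ?_ ?_⟩
  · exact fun A _ hAB => hAB.mono_right (Finset.erase_subset a B)
  · exact fun C _ hBC => hBC.mono_left (Finset.erase_subset a B)
  · rcases eq_or_ne b a with rfl | hba
    · simpa [haS] using ha_notMem
    · simpa [hba] using hunion b
  · exact fun A _ hAB => hmax_erase ▸ hAB
  · exact fun C _ hBC => hmax_erase ▸ hBC

lemma IsALOP.eq_nil_of_append_singleton_cons (h : IsALOP (insert a S) (L₁ ++ {a} :: L₂))
    (ha : ∀ b ∈ S, a < b) : L₁ = [] := by
  obtain _ | ⟨A, L₁⟩ := L₁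
  · rfl
  obtain ⟨hne, hdisj, -, hmax⟩ := isALOP_iff.1 h
  obtain ⟨c, hc⟩ : A.Nonempty := hne A (by simp)
  have hca : c ≠ a := by
    rintro rfl
    exact Finset.disjoint_left.1 ((List.pairwise_cons.1 hdisj).1 {c} (by simp)) hc
      (Finset.mem_singleton_self c)
  have hac : a < c := by
    have := h.subset (by simp) hc
    rw [Finset.mem_insert] at this
    exact ha c (this.resolve_left hca)
  have hca' := (Finset.le_max hc).trans ((List.pairwise_cons.1 hmax).1 {a} (by simp))
  rw [Finset.max_singleton, WithBot.coe_le_coe] at hca'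
  omega

lemma IsALOP.singleton_notMem_append_insert_cons (h : IsALOP S (L₁ ++ B :: L₂)) (ha : a ∉ S) :
    {a} ∉ L₁ ++ insert a B :: L₂ := by
  obtain ⟨b, hb⟩ := (isALOP_iff.1 h).1 B (by simp)
  rw [List.perm_middle.mem_iff, List.mem_cons]
  rintro (hB | hB)
  · have hba : b = a := Finset.mem_singleton.1 (hB ▸ Finset.mem_insert_of_mem hb)
    exact ha (hba ▸ h.subset (by simp) hb)
  · exact ha (h.subset (List.mem_append.2 ((List.mem_append.1 hB).imp_right
      (List.mem_cons_of_mem B))) (Finset.mem_singleton_self a))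

lemma findIdx_append_insert_cons (h₁ : ∀ C ∈ L₁, a ∉ C) :
    (L₁ ++ insert a B :: L₂).findIdx (a ∈ ·) = L₁.length := by
  have : L₁.findIdx (a ∈ ·) = L₁.length := List.findIdx_eq_length.2 (by simpa using h₁)
  simp [List.findIdx_append, List.findIdx_cons, this]

lemma map_erase_append_insert_cons (h : ∀ C ∈ L₁ ++ B :: L₂, a ∉ C) :
    (L₁ ++ insert a B :: L₂).map (·.erase a) = L₁ ++ B :: L₂ := by
  have hid : ∀ L : List (Finset ℕ), (∀ C ∈ L, a ∉ C) → L.map (·.erase a) = L := fun L hL =>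
    (List.map_congr_left fun C hC => Finset.erase_eq_of_notMem (hL C hC)).trans (List.map_id L)
  simp only [List.map_append, List.map_cons, Finset.erase_insert (h B (by simp)),
    hid L₁ fun C hC => h C (by simp [hC]), hid L₂ fun C hC => h C (by simp [hC])]

end InsertMin

lemma List.exists_eq_append_cons_of_lt_length {α : Type*} {l : List α} {j : ℕ}
    (hj : j < l.length) : ∃ l₁ b l₂, l = l₁ ++ b :: l₂ ∧ l₁.length = j :=
  ⟨l.take j, l[j], l.drop (j + 1), by simp [List.getElem_cons_drop], by simp; omega⟩

lemma shiftUp_injective : Function.Injective shiftUp :=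
  List.map_injective_iff.2 (Finset.image_injective (add_left_injective 1))

lemma isALOP_shiftUp_iff {a b : ℕ} {L : List (Finset ℕ)} :
    IsALOP (Finset.Icc (a + 1) (b + 1)) (shiftUp L) ↔ IsALOP (Finset.Icc a b) L := by
  rw [← Finset.image_add_right_Icc]
  exact isALOP_map_image_iff (strictMono_id.add_const 1)

lemma IsALOP.exists_shiftUp_eq {a b : ℕ} {M : List (Finset ℕ)}
    (h : IsALOP (Finset.Icc (a + 1) (b + 1)) M) :
    ∃ L, shiftUp L = M ∧ IsALOP (Finset.Icc a b) L := by
  have hpos : ∀ B ∈ M, ∀ x ∈ B, 0 < x := fun B hB x hx =>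
    (Finset.mem_Icc.1 (h.subset hB hx)).1.trans_lt' (Nat.succ_pos a)
  have hM : shiftUp (M.map (Finset.image (· - 1))) = M := by
    refine (List.map_map ..).trans (List.map_congr_left fun B hB => ?_) |>.trans (List.map_id M)
    rw [Function.comp_apply, Finset.image_image, id]
    conv_rhs => rw [← Finset.image_id (s := B)]
    exact Finset.image_congr fun x hx => Nat.sub_add_cancel (hpos B hB x hx)
  exact ⟨_, hM, isALOP_shiftUp_iff.1 (hM.symm ▸ h)⟩

lemma derive_zero (L : List (Finset ℕ)) : derive L 0 = {1} :: shiftUp L := rfl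

lemma derive_succ_of_shiftUp_eq {L L₁ L₂ : List (Finset ℕ)} {B : Finset ℕ}
    (h : shiftUp L = L₁ ++ B :: L₂) : derive L (L₁.length + 1) = L₁ ++ insert 1 B :: L₂ := by
  simp [derive, h]

section Derive

variable {n : ℕ}

lemma one_lt_of_mem_Icc_two {b : ℕ} (hb : b ∈ Finset.Icc 2 (n + 1)) : 1 < b :=
  (Finset.mem_Icc.1 hb).1

lemma insert_one_Icc_two : insert 1 (Finset.Icc 2 (n + 1)) = Finset.Icc 1 (n + 1) :=
  Finset.insert_Icc_add_one_left_eq_Icc (by omega)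

lemma IsALOP.exists_shiftUp_eq_append_cons {L : List (Finset ℕ)} (h : IsALOP (Finset.Icc 1 n) L)
    {j : ℕ} (hj : j < L.length) : ∃ L₁ B L₂, shiftUp L = L₁ ++ B :: L₂ ∧ L₁.length = j ∧
      IsALOP (Finset.Icc 2 (n + 1)) (L₁ ++ B :: L₂) := by
  obtain ⟨L₁, B, L₂, hsplit, hlen⟩ :=
    List.exists_eq_append_cons_of_lt_length (l := shiftUp L) (by simpa [shiftUp] using hj)
  have hM : IsALOP (Finset.Icc 2 (n + 1)) (shiftUp L) := isALOP_shiftUp_iff.2 h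
  exact ⟨L₁, B, L₂, hsplit, hlen, hsplit ▸ hM⟩

lemma IsALOP.derive {L : List (Finset ℕ)} (h : IsALOP (Finset.Icc 1 n) L) {m : ℕ}
    (hm : m ≤ L.length) : IsALOP (Finset.Icc 1 (n + 1)) (derive L m) := by
  rw [← insert_one_Icc_two]
  cases m with
  | zero =>
    exact (isALOP_singleton_cons_iff fun _ => one_lt_of_mem_Icc_two).2 (isALOP_shiftUp_iff.2 h)
  | succ j =>
    obtain ⟨L₁, B, L₂, hsplit, rfl, hM⟩ := h.exists_shiftUp_eq_append_cons hm
    rw [derive_succ_of_shiftUp_eq hsplit]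
    exact hM.append_insert_cons fun _ => one_lt_of_mem_Icc_two

lemma derive_zero_ne_derive_succ (L : List (Finset ℕ)) {L' : List (Finset ℕ)}
    (hL' : IsALOP (Finset.Icc 1 n) L') {j : ℕ} (hj : j < L'.length) :
    derive L 0 ≠ derive L' (j + 1) := by
  obtain ⟨L₁, B, L₂, hsplit, rfl, hM⟩ := hL'.exists_shiftUp_eq_append_cons hj
  rw [derive_zero, derive_succ_of_shiftUp_eq hsplit]
  intro heq
  exact hM.singleton_notMem_append_insert_cons (by simp) (heq ▸ List.mem_cons_self)

lemma eq_of_derive_succ_eq {L L' : List (Finset ℕ)} (hL : IsALOP (Finset.Icc 1 n) L)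
    (hL' : IsALOP (Finset.Icc 1 n) L') {j j' : ℕ} (hj : j < L.length) (hj' : j' < L'.length)
    (heq : derive L (j + 1) = derive L' (j' + 1)) : L = L' ∧ j = j' := by
  obtain ⟨L₁, B, L₂, hsplit, rfl, hM⟩ := hL.exists_shiftUp_eq_append_cons hj
  obtain ⟨L₁', B', L₂', hsplit', rfl, hM'⟩ := hL'.exists_shiftUp_eq_append_cons hj'
  rw [derive_succ_of_shiftUp_eq hsplit, derive_succ_of_shiftUp_eq hsplit'] at heq
  have one_notMem : ∀ {M : List (Finset ℕ)}, IsALOP (Finset.Icc 2 (n + 1)) M → ∀ C ∈ M, 1 ∉ C :=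
    fun hM C hC h1 => by simpa using hM.subset hC h1
  have h_erase := congrArg (List.map (·.erase 1)) heq
  rw [map_erase_append_insert_cons (one_notMem hM), map_erase_append_insert_cons (one_notMem hM'),
    ← hsplit, ← hsplit'] at h_erase
  have h_findIdx := congrArg (List.findIdx (1 ∈ ·)) heq
  rw [findIdx_append_insert_cons fun C hC => one_notMem hM C (by simp [hC]),
    findIdx_append_insert_cons fun C hC => one_notMem hM' C (by simp [hC])] at h_findIdx
  exact ⟨shiftUp_injective h_erase, h_findIdx⟩

lemma derive_injOn : Set.InjOn (fun p : List (Finset ℕ) × ℕ => derive p.1 p.2)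
    {p | IsALOP (Finset.Icc 1 n) p.1 ∧ p.2 ≤ p.1.length} := by
  rintro ⟨L, m⟩ ⟨hL, hm⟩ ⟨L', m'⟩ ⟨hL', hm'⟩ (heq : derive L m = derive L' m')
  cases m with
  | zero =>
    cases m' with
    | zero =>
      rw [derive_zero, derive_zero] at heq
      rw [shiftUp_injective (List.cons_inj_right _ |>.1 heq)]
    | succ j' => exact absurd heq (derive_zero_ne_derive_succ L hL' hm')
  | succ j =>
    cases m' with
    | zero => exact absurd heq.symm (derive_zero_ne_derive_succ L' hL hm)
    | succ j' =>
      obtain ⟨rfl, rfl⟩ := eq_of_derive_succ_eq hL hL' hm hm' heq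
      rfl

lemma derive_surjOn : Set.SurjOn (fun p : List (Finset ℕ) × ℕ => derive p.1 p.2)
    {p | IsALOP (Finset.Icc 1 n) p.1 ∧ p.2 ≤ p.1.length}
    {L | IsALOP (Finset.Icc 1 (n + 1)) L} := by
  intro L' (hL' : IsALOP _ L')
  rw [← insert_one_Icc_two] at hL'
  have h1 : ∀ b ∈ Finset.Icc 2 (n + 1), 1 < b := fun _ => one_lt_of_mem_Icc_two
  obtain ⟨B, hB, h1B⟩ := ((isALOP_iff.1 hL').2.2.1 1).1 (Finset.mem_insert_self 1 _)
  obtain ⟨L₁, L₂, rfl⟩ := List.append_of_mem hB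
  by_cases hB1 : B = {1}
  · subst hB1
    obtain rfl := hL'.eq_nil_of_append_singleton_cons h1
    obtain ⟨L, hL₂, hL⟩ := ((isALOP_singleton_cons_iff h1).1 hL').exists_shiftUp_eq
    exact ⟨(L, 0), ⟨hL, Nat.zero_le _⟩, by simp [derive_zero, hL₂]⟩
  · obtain ⟨L, hsplit, hL⟩ := (hL'.append_erase_cons h1 h1B hB1).exists_shiftUp_eq
    refine ⟨(L, L₁.length + 1), ⟨hL, ?_⟩, ?_⟩
    · have hlen := congrArg List.length hsplit
      simp only [shiftUp, List.length_map, List.length_append, List.length_cons] at hlen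
      change L₁.length + 1 ≤ L.length
      omega
    · simp only [derive_succ_of_shiftUp_eq hsplit, Finset.insert_erase h1B]

end Derive

theorem stmt2_general (n : ℕ) :
    (∀ L : List (Finset ℕ), IsALOP (Finset.Icc 1 n) L →
      ∀ m ≤ L.length, IsALOP (Finset.Icc 1 (n + 1)) (derive L m)) ∧
    Set.BijOn (fun p : List (Finset ℕ) × ℕ => derive p.1 p.2)
      {p | IsALOP (Finset.Icc 1 n) p.1 ∧ p.2 ≤ p.1.length}
      {L | IsALOP (Finset.Icc 1 (n + 1)) L} :=
  ⟨fun _ hL _ hm => hL.derive hm, fun _ hp => hp.1.derive hp.2, derive_injOn, derive_surjOn⟩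

/-- (a) each derived partition `λ^[m]` (for `λ ∈ P_n`, `0 ≤ m ≤ length λ`)
is an anti-lexicographically ordered partition of `{1, …, n+1}`; (b) the map
`(λ, m) ↦ λ^[m]` is a bijection from `{(λ, m) : λ ∈ P_n, 0 ≤ m ≤ length λ}` onto `P_{n+1}`. -/
theorem stmt2 (n : ℕ) (hn : 1 ≤ n) :
    (∀ L : List (Finset ℕ), IsALOP (Finset.Icc 1 n) L →
      ∀ m ≤ L.length, IsALOP (Finset.Icc 1 (n + 1)) (derive L m)) ∧
    Set.BijOn (fun p : List (Finset ℕ) × ℕ => derive p.1 p.2)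
      {p | IsALOP (Finset.Icc 1 n) p.1 ∧ p.2 ≤ p.1.length}
      {L | IsALOP (Finset.Icc 1 (n + 1)) L} :=
  stmt2_general n
end

section
/- The multiplication defined on G × 𝔤^k in the context is associative: (a·b)·c = a·(b·c) for all a, b, c ∈ G × 𝔤^k. -/
section Jet

variable {R : Type*} [CommRing R] {𝔤 : Type*} [LieRing 𝔤] [LieAlgebra R 𝔤]
variable {G : Type*} [Group G]

/-- Extend a `k`-tuple `(x_1, …, x_k)` (with slot `n` stored at index `n-1`) to a
function on `ℕ`, by `0` outside `{1, …, k}`. -/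
def extX (k : ℕ) (x : Fin k → 𝔤) : ℕ → 𝔤 :=
  fun n => if h : 1 ≤ n ∧ n ≤ k then x ⟨n - 1, by omega⟩ else 0

/-- The `n`-th component of the jet product:
`z_n = x_n + Σ_{ℓ} Σ_{i₁+⋯+i_ℓ=n} N_{(i₁,…,i_ℓ)} ad_{x_{i_{ℓ−1}}} ⋯ ad_{x_{i₁}} (y'_{i_ℓ})`,
where `y'` already incorporates `Ad_g`. -/
def jetZ (x y : ℕ → 𝔤) (n : ℕ) : 𝔤 :=
  x n + ∑ c : Composition n,
    Ncoef c.blocks •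
      (c.blocks.dropLast.foldl (fun v i => ⁅x i, v⁆) (y (c.blocks.getLast?.getD 0)))

/-- The multiplication on `G × 𝔤^k`. -/
def jetMul (k : ℕ) (Ad : G → 𝔤 →ₗ⁅R⁆ 𝔤) (p q : G × (Fin k → 𝔤)) :
    G × (Fin k → 𝔤) :=
  (p.1 * q.1, fun j => jetZ (extX k p.2) (fun i => Ad p.1 (extX k q.2 i)) (j.val + 1))

end Jet

/-!
Read a sequence `x : ℕ → 𝔤` as the exponential generating function `X(t) = ∑ xₙ tⁿ / n!`;
then `binomSum m (fun i j => a i * b j)` is the coefficient of `tᵐ / m!` in the product `A B`.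
In these terms `jetAd x` solves `T' = ad_{X'} T`, `T(0) = 1` (it plays the role of `Ad γ(t)` for
the curve `γ` with `γ' γ⁻¹ = X'`), and `jetZ x y` is the series `Z` with `Z' = X' + T Y'`, i.e.
the curve `γ δ`. There is no calculus over an arbitrary Lie ring, but each step is an identity
between binomial convolutions: sequences obeying the same recursion
`f (m + 1) = binomSum m (fun i j => B i (f j))` coincide, which shows that `jetAd x` preserves
brackets (by the Jacobi identity) and that `jetAd (jetZ x y)` is the convolution of `jetAd x`
and `jetAd y`. Associativity is then a reindexing of a triple binomial sum.
-/

open Finset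

section BinomSum

variable {M : Type*} [AddCommMonoid M]

def binomSum (m : ℕ) (F : ℕ → ℕ → M) : M :=
  ∑ p ∈ antidiagonal m, m.choose p.1 • F p.1 p.2

@[simp] lemma binomSum_zero (F : ℕ → ℕ → M) : binomSum 0 F = F 0 0 := by
  simp [binomSum]

lemma binomSum_succ (m : ℕ) (F : ℕ → ℕ → M) :
    binomSum (m + 1) F
      = binomSum m (fun i j => F (i + 1) j) + binomSum m (fun i j => F i (j + 1)) := by
  rw [binomSum, sum_antidiagonal_choose_succ_nsmul, add_comm]
  congr 1
  exact sum_congr rfl fun p hp => by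
    rw [Nat.choose_symm_of_eq_add (HasAntidiagonal.mem_antidiagonal.1 hp).symm]

lemma binomSum_congr {m : ℕ} {F G : ℕ → ℕ → M}
    (h : ∀ i j, i + j = m → F i j = G i j) : binomSum m F = binomSum m G :=
  sum_congr rfl fun p hp => by rw [h p.1 p.2 (HasAntidiagonal.mem_antidiagonal.1 hp)]

lemma binomSum_add (m : ℕ) (F G : ℕ → ℕ → M) :
    binomSum m (fun i j => F i j + G i j) = binomSum m F + binomSum m G := by
  simp only [binomSum, smul_add, sum_add_distrib]

lemma map_binomSum {N Φ : Type*} [AddCommMonoid N] [FunLike Φ M N] [AddMonoidHomClass Φ M N]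
    (φ : Φ) (m : ℕ) (F : ℕ → ℕ → M) :
    φ (binomSum m F) = binomSum m (fun i j => φ (F i j)) := by
  simp only [binomSum, map_sum, map_nsmul]

lemma binomSum_comm (m : ℕ) (F : ℕ → ℕ → M) :
    binomSum m F = binomSum m (fun i j => F j i) := by
  rw [binomSum, ← Nat.sum_antidiagonal_swap]
  exact sum_congr rfl fun p hp => by
    rw [Prod.fst_swap, Prod.snd_swap,
      Nat.choose_symm_of_eq_add (HasAntidiagonal.mem_antidiagonal.1 hp).symm]

lemma binomSum_binomSum_comm (m n : ℕ) (F : ℕ → ℕ → ℕ → ℕ → M) :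
    binomSum m (fun i j => binomSum n (fun k l => F i j k l))
      = binomSum n (fun k l => binomSum m (fun i j => F i j k l)) := by
  simp only [binomSum, smul_sum]
  rw [sum_comm]
  exact sum_congr rfl fun _ _ => sum_congr rfl fun _ _ => smul_comm _ _ _

lemma binomSum_assoc (m : ℕ) (F : ℕ → ℕ → ℕ → M) :
    binomSum m (fun i k => binomSum i (fun a b => F a b k))
      = binomSum m (fun a j => binomSum j (fun b c => F a b c)) := by
  simp only [binomSum, smul_sum, smul_smul, sum_sigma']
  refine sum_nbij' (fun x => ⟨(x.2.1, x.2.2 + x.1.2), (x.2.2, x.1.2)⟩)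
    (fun x => ⟨(x.1.1 + x.2.1, x.2.2), (x.1.1, x.2.1)⟩) ?_ ?_ ?_ ?_ ?_
  · rintro ⟨⟨i, k⟩, ⟨a, b⟩⟩ h
    simp only [mem_sigma, HasAntidiagonal.mem_antidiagonal, and_true] at h ⊢
    omega
  · rintro ⟨⟨a, j⟩, ⟨b, c⟩⟩ h
    simp only [mem_sigma, HasAntidiagonal.mem_antidiagonal, and_true] at h ⊢
    omega
  · rintro ⟨⟨i, k⟩, ⟨a, b⟩⟩ h
    simp only [mem_sigma, HasAntidiagonal.mem_antidiagonal] at h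
    obtain ⟨rfl, rfl⟩ := h
    rfl
  · rintro ⟨⟨a, j⟩, ⟨b, c⟩⟩ h
    simp only [mem_sigma, HasAntidiagonal.mem_antidiagonal] at h
    obtain ⟨rfl, rfl⟩ := h
    rfl
  · rintro ⟨⟨i, k⟩, ⟨a, b⟩⟩ h
    simp only [mem_sigma, HasAntidiagonal.mem_antidiagonal] at h
    obtain ⟨rfl, rfl⟩ := h
    dsimp only
    rw [Nat.choose_mul (Nat.le_add_right a b), Nat.add_sub_cancel_left, add_assoc,
      Nat.add_sub_cancel_left]

lemma binomSum_left_comm (m : ℕ) (F : ℕ → ℕ → ℕ → M) :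
    binomSum m (fun a j => binomSum j (fun b c => F a b c))
      = binomSum m (fun b j => binomSum j (fun a c => F a b c)) := by
  rw [← binomSum_assoc, ← binomSum_assoc]
  exact binomSum_congr fun i _ _ => binomSum_comm i _

lemma binomSum_interchange (m : ℕ) (F : ℕ → ℕ → ℕ → ℕ → M) :
    binomSum m (fun r s => binomSum s (fun a b => binomSum r (fun p q => F a p q b)))
      = binomSum m (fun i j => binomSum j (fun q b => binomSum i (fun a p => F a p q b))) := by
  calc _ = binomSum m (fun r s => binomSum r (fun p q => binomSum s (fun a b => F a p q b))) :=
        binomSum_congr fun r s _ => binomSum_binomSum_comm s r _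
    _ = binomSum m (fun p c => binomSum c (fun q s => binomSum s (fun a b => F a p q b))) :=
        binomSum_assoc m _
    _ = binomSum m (fun p c => binomSum c (fun a e => binomSum e (fun q b => F a p q b))) :=
        binomSum_congr fun p c _ => binomSum_left_comm c _
    _ = binomSum m (fun a c => binomSum c (fun p e => binomSum e (fun q b => F a p q b))) :=
        binomSum_left_comm m _
    _ = binomSum m (fun i j => binomSum i (fun a p => binomSum j (fun q b => F a p q b))) :=
        (binomSum_assoc m _).symm
    _ = _ := binomSum_congr fun i j _ => binomSum_binomSum_comm i j _

lemma eq_of_binomSum_recursion {f g : ℕ → M} (B : ℕ → M → M) (h0 : f 0 = g 0)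
    (hf : ∀ m, f (m + 1) = binomSum m (fun i j => B i (f j)))
    (hg : ∀ m, g (m + 1) = binomSum m (fun i j => B i (g j))) : f = g := by
  funext n
  induction n using Nat.strong_induction_on with
  | _ n ih =>
    cases n with
    | zero => exact h0
    | succ m => rw [hf, hg]; exact binomSum_congr fun i j hij => by rw [ih j (by omega)]

end BinomSum

section Compositions

lemma Ncoef_append_singleton (l : List ℕ) (j : ℕ) :
    Ncoef (l ++ [j]) = (l.sum + j - 1).choose (j - 1) * Ncoef l := by
  induction l using Ncoef.induct with
  | case1 => simp [Ncoef]
  | case2 a => simp [Ncoef]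
  | case3 a b rest ih =>
    rw [List.cons_append, List.cons_append, Ncoef, ← List.cons_append, ih, Ncoef]
    simp only [List.sum_cons]
    ring_nf

lemma Composition.heq_of_blocks_eq {m n : ℕ} (h : m = n) {c : Composition m}
    {d : Composition n} (hb : c.blocks = d.blocks) : HEq c d := by
  subst h
  exact heq_of_eq (Composition.ext hb)

variable {M : Type*} [AddCommMonoid M]

lemma sum_composition_succ (m : ℕ) (F : List ℕ → M) :
    ∑ c : Composition (m + 1), F c.blocks
      = ∑ p ∈ antidiagonal m, ∑ d : Composition p.2, F (d.blocks ++ [p.1 + 1]) := by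
  rw [sum_sigma']
  have hne (c : Composition (m + 1)) : c.blocks ≠ [] := by simp [Composition.blocks_eq_nil]
  have hlast (c : Composition (m + 1)) :
      1 ≤ c.blocks.getLast (hne c) ∧ c.blocks.getLast (hne c) ≤ m + 1 :=
    ⟨c.one_le_blocks (List.getLast_mem _), c.blocks_le (List.getLast_mem _)⟩
  have hsum (c : Composition (m + 1)) :
      c.blocks.dropLast.sum + c.blocks.getLast (hne c) = m + 1 := by
    have h := congrArg List.sum (List.dropLast_append_getLast (hne c))
    rwa [List.sum_append, List.sum_singleton, c.blocks_sum] at h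
  have hrebuild (c : Composition (m + 1)) :
      c.blocks.dropLast ++ [c.blocks.getLast (hne c) - 1 + 1] = c.blocks := by
    rw [Nat.sub_add_cancel (hlast c).1, List.dropLast_append_getLast]
  refine sum_bij'
    (fun c _ => ⟨(c.blocks.getLast (hne c) - 1, m + 1 - c.blocks.getLast (hne c)),
      ⟨c.blocks.dropLast, fun hi => c.blocks_pos (List.dropLast_subset _ hi),
        by have := hsum c; dsimp only; omega⟩⟩)
    (fun x hx => ⟨x.2.blocks ++ [x.1.1 + 1], ?_, ?_⟩) ?_ ?_ ?_ ?_ ?_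
  · intro i hi
    rcases List.mem_append.1 hi with hi | hi
    · exact x.2.blocks_pos hi
    · simp only [List.mem_singleton] at hi
      omega
  · have := HasAntidiagonal.mem_antidiagonal.1 (mem_sigma.1 hx).1
    rw [List.sum_append, x.2.blocks_sum, List.sum_singleton]
    omega
  · intro c _
    have := hlast c
    simp only [mem_sigma, HasAntidiagonal.mem_antidiagonal, mem_univ, and_true]
    omega
  · exact fun _ _ => mem_univ _
  · exact fun c _ => Composition.ext (hrebuild c)
  · rintro ⟨⟨i, j⟩, d⟩ hx
    have : i + j = m := HasAntidiagonal.mem_antidiagonal.1 (mem_sigma.1 hx).1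
    refine Sigma.ext ?_ (Composition.heq_of_blocks_eq ?_ ?_) <;>
      simp only [List.getLast_concat, List.dropLast_concat, Prod.mk.injEq] <;> omega
  · exact fun c _ => congrArg F (hrebuild c).symm

end Compositions

lemma LieHom.map_jetZ {R L L' : Type*} [CommRing R] [LieRing L] [LieAlgebra R L] [LieRing L']
    [LieAlgebra R L'] (φ : L →ₗ⁅R⁆ L') (x y : ℕ → L) (n : ℕ) :
    φ (jetZ x y n) = jetZ (fun i => φ (x i)) (fun i => φ (y i)) n := by
  simp only [jetZ, map_add, map_sum, map_nsmul]
  refine congrArg _ (sum_congr rfl fun c _ => congrArg _ ?_)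
  exact (List.foldl_hom φ fun _ _ => (φ.map_lie _ _).symm).symm

section JetAd

variable {L : Type*} [LieRing L]

lemma lie_binomSum (u : L) (m : ℕ) (F : ℕ → ℕ → L) :
    ⁅u, binomSum m F⁆ = binomSum m (fun i j => ⁅u, F i j⁆) := by
  simp only [binomSum, lie_sum, lie_nsmul]

lemma binomSum_lie (v : L) (m : ℕ) (F : ℕ → ℕ → L) :
    ⁅binomSum m F, v⁆ = binomSum m (fun i j => ⁅F i j, v⁆) := by
  simp only [binomSum, sum_lie, nsmul_lie]

lemma binomSum_apply (m : ℕ) (F : ℕ → ℕ → Module.End ℤ L) (v : L) :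
    binomSum m F v = binomSum m (fun i j => F i j v) := by
  simp only [binomSum, LinearMap.sum_apply, LinearMap.smul_apply]

def adProd (x : ℕ → L) (l : List ℕ) : Module.End ℤ L :=
  l.foldl (fun f i => LieAlgebra.ad ℤ L (x i) * f) 1

lemma adProd_apply (x : ℕ → L) (l : List ℕ) (v : L) :
    adProd x l v = l.foldl (fun w i => ⁅x i, w⁆) v :=
  (List.foldl_hom (fun f : Module.End ℤ L => f v) fun _ _ => rfl).symm

lemma adProd_append_singleton (x : ℕ → L) (l : List ℕ) (j : ℕ) :
    adProd x (l ++ [j]) = LieAlgebra.ad ℤ L (x j) * adProd x l := by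
  simp [adProd]

def jetAd (x : ℕ → L) (m : ℕ) : Module.End ℤ L :=
  ∑ d : Composition m, Ncoef d.blocks • adProd x d.blocks

lemma jetAd_zero (x : ℕ → L) : jetAd x 0 = 1 := by
  have : Subsingleton (Composition 0) :=
    ⟨fun c d => Composition.ext (by rw [c.blocks_eq_nil.2 rfl, d.blocks_eq_nil.2 rfl])⟩
  rw [jetAd, Fintype.sum_subsingleton _ (Composition.ones 0)]
  simp [Ncoef, adProd]

lemma jetAd_succ (x : ℕ → L) (m : ℕ) :
    jetAd x (m + 1) = binomSum m (fun i j => LieAlgebra.ad ℤ L (x (i + 1)) * jetAd x j) := by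
  rw [jetAd, sum_composition_succ m (fun l => Ncoef l • adProd x l), binomSum]
  refine sum_congr rfl fun p hp => ?_
  rw [jetAd, mul_sum, smul_sum]
  refine sum_congr rfl fun d _ => ?_
  rw [Ncoef_append_singleton, adProd_append_singleton, d.blocks_sum, mul_smul, mul_smul_comm,
    Nat.add_sub_cancel, show p.2 + (p.1 + 1) - 1 = m by
      have := HasAntidiagonal.mem_antidiagonal.1 hp; omega]

lemma jetAd_apply_succ (x : ℕ → L) (m : ℕ) (v : L) :
    jetAd x (m + 1) v = binomSum m (fun i j => ⁅x (i + 1), jetAd x j v⁆) := by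
  rw [jetAd_succ, binomSum_apply]
  rfl

lemma jetZ_succ (x y : ℕ → L) (m : ℕ) :
    jetZ x y (m + 1) = x (m + 1) + binomSum m (fun i j => jetAd x j (y (i + 1))) := by
  rw [jetZ, sum_composition_succ m
    (fun l => Ncoef l • l.dropLast.foldl (fun v i => ⁅x i, v⁆) (y (l.getLast?.getD 0))), binomSum]
  congr 1
  refine sum_congr rfl fun p hp => ?_
  rw [jetAd, LinearMap.sum_apply, smul_sum]
  refine sum_congr rfl fun d _ => ?_
  rw [List.dropLast_concat, List.getLast?_concat, Option.getD_some, Ncoef_append_singleton,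
    d.blocks_sum, LinearMap.smul_apply, adProd_apply, mul_smul, Nat.add_sub_cancel,
    show p.2 + (p.1 + 1) - 1 = m by have := HasAntidiagonal.mem_antidiagonal.1 hp; omega]

lemma jetAd_congr {x x' : ℕ → L} {m : ℕ} (h : Set.EqOn x x' (Set.Icc 1 m)) :
    jetAd x m = jetAd x' m := by
  induction m using Nat.strong_induction_on with
  | _ m ih =>
    cases m with
    | zero => rw [jetAd_zero, jetAd_zero]
    | succ m =>
      rw [jetAd_succ, jetAd_succ]
      refine binomSum_congr fun i j hij => ?_
      rw [h ⟨by omega, by omega⟩,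
        ih j (by omega) (h.mono (Set.Icc_subset_Icc le_rfl (by omega)))]

lemma jetZ_congr {x x' y y' : ℕ → L} {n : ℕ} (hx : Set.EqOn x x' (Set.Icc 1 (n + 1)))
    (hy : Set.EqOn y y' (Set.Icc 1 (n + 1))) : jetZ x y (n + 1) = jetZ x' y' (n + 1) := by
  rw [jetZ_succ, jetZ_succ, hx ⟨by omega, le_rfl⟩]
  refine congrArg _ (binomSum_congr fun i j hij => ?_)
  rw [jetAd_congr (hx.mono (Set.Icc_subset_Icc le_rfl (by omega))), hy ⟨by omega, by omega⟩]

lemma jetAd_lie (x : ℕ → L) (m : ℕ) (u v : L) :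
    jetAd x m ⁅u, v⁆ = binomSum m (fun i j => ⁅jetAd x i u, jetAd x j v⁆) := by
  refine congrFun (eq_of_binomSum_recursion (f := fun m => jetAd x m ⁅u, v⁆)
    (g := fun m => binomSum m (fun i j => ⁅jetAd x i u, jetAd x j v⁆))
    (fun i w => ⁅x (i + 1), w⁆) ?_ (fun m => jetAd_apply_succ x m _) fun m => ?_) m
  · simp only [binomSum_zero, jetAd_zero, Module.End.one_apply]
  · simp only [binomSum_succ, jetAd_apply_succ, binomSum_lie, lie_binomSum]
    conv_rhs => enter [2, i, j, 2, a, b]; rw [leibniz_lie]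
    simp only [binomSum_add]
    congr 1
    · exact binomSum_assoc m _
    · exact binomSum_left_comm m _

lemma jetAd_jetZ (x y : ℕ → L) (m : ℕ) (v : L) :
    jetAd (jetZ x y) m v = binomSum m (fun i j => jetAd x i (jetAd y j v)) := by
  refine congrFun (eq_of_binomSum_recursion (f := fun m => jetAd (jetZ x y) m v)
    (g := fun m => binomSum m (fun i j => jetAd x i (jetAd y j v)))
    (fun i w => ⁅jetZ x y (i + 1), w⁆) ?_ (fun m => jetAd_apply_succ _ m _) fun m => ?_) m
  · simp only [binomSum_zero, jetAd_zero, Module.End.one_apply]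
  · simp only [binomSum_succ, jetAd_apply_succ, map_binomSum, jetAd_lie, jetZ_succ, add_lie,
      binomSum_add, binomSum_lie, lie_binomSum]
    exact congrArg₂ (· + ·) (binomSum_assoc m _) (binomSum_interchange m _)

lemma jetZ_assoc (x y w : ℕ → L) (n : ℕ) :
    jetZ (jetZ x y) w (n + 1) = jetZ x (jetZ y w) (n + 1) := by
  simp only [jetZ_succ, jetAd_jetZ, map_add, map_binomSum, binomSum_add, add_assoc]
  congr 2
  rw [binomSum_assoc n (fun a b k => jetAd x k (jetAd y b (w (a + 1))))]
  exact binomSum_congr fun i j _ => binomSum_comm j _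

lemma extX_eqOn (k : ℕ) (f : ℕ → L) :
    Set.EqOn (extX k fun j : Fin k => f (j + 1)) f (Set.Icc 1 k) := by
  intro i hi
  rw [extX, dif_pos (show 1 ≤ i ∧ i ≤ k from hi)]
  exact congrArg f (Nat.sub_add_cancel hi.1)

end JetAd

theorem stmt3_general {R : Type*} [CommRing R] {𝔤 : Type*} [LieRing 𝔤] [LieAlgebra R 𝔤]
    {G : Type*} [Group G] (k : ℕ)
    (Ad : G → 𝔤 →ₗ⁅R⁆ 𝔤)
    (hAdmul : ∀ g h : G, Ad (g * h) = (Ad g).comp (Ad h))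
    (a b c : G × (Fin k → 𝔤)) :
    jetMul k Ad (jetMul k Ad a b) c = jetMul k Ad a (jetMul k Ad b c) := by
  refine Prod.ext (mul_assoc a.1 b.1 c.1) (funext fun j => ?_)
  have hj : Set.Icc 1 (j.val + 1) ⊆ Set.Icc 1 k := Set.Icc_subset_Icc le_rfl j.isLt
  simp only [jetMul, hAdmul, LieHom.comp_apply]
  calc _ = jetZ (jetZ (extX k a.2) fun i => Ad a.1 (extX k b.2 i))
          (fun i => Ad a.1 (Ad b.1 (extX k c.2 i))) (j + 1) :=
        jetZ_congr ((extX_eqOn k _).mono hj) fun _ _ => rfl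
    _ = _ := jetZ_assoc _ _ _ _
    _ = _ := jetZ_congr (fun _ _ => rfl) fun i hi => by
        rw [extX_eqOn k _ (hj hi), LieHom.map_jetZ]

/-- the multiplication on `G × 𝔤^k` is associative. -/
theorem stmt3 {R : Type*} [CommRing R] {𝔤 : Type*} [LieRing 𝔤] [LieAlgebra R 𝔤]
    {G : Type*} [Group G] (k : ℕ) (hk : 1 ≤ k)
    (Ad : G → 𝔤 →ₗ⁅R⁆ 𝔤)
    (hAd1 : Ad 1 = LieHom.id)
    (hAdmul : ∀ g h : G, Ad (g * h) = (Ad g).comp (Ad h))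
    (a b c : G × (Fin k → 𝔤)) :
    jetMul k Ad (jetMul k Ad a b) c = jetMul k Ad a (jetMul k Ad b c) :=
  stmt3_general k Ad hAdmul a b c
end

section
/- In J_k(𝔤), for all x, y ∈ 𝔤 the product of the pure elements (x, 0, …, 0) and (y, 0, …, 0) is (x + y, ad_x y, ad_x² y, …, ad_x^{k−1} y); that is, the n-th component of the product is x + y for n = 1 and ad_x^{n−1} y for 2 ≤ n ≤ k. -/
section Defs

variable {R : Type*} [CommRing R] {𝔤 : Type*} [LieRing 𝔤] [LieAlgebra R 𝔤]

/-- The multiplication on `J_k(𝔤) = 𝔤^k`. -/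
def jMul (k : ℕ) (x y : Fin k → 𝔤) : Fin k → 𝔤 :=
  fun j => jetZ (extX k x) (extX k y) (j.val + 1)

end Defs

/-!
For pure elements only the slot-`1` components of `x` and `y` are nonzero, so in the sum
defining `z_n` every composition of `n` with a part `i > 1` contributes `0`: the part is either
the index of some `ad_{x_i}` or the index `i_ℓ` of `y_{i_ℓ}`. Only the composition `(1, …, 1)`
survives; its coefficient is a product of binomials `C(m, 0) = 1`, and its term is
`ad_{x_1}^{n-1} y_1`.
-/

theorem List.foldl_replicate_eq_iterate {α β : Type*} (f : α → β → α) (b : β) (t : ℕ) (a : α) :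
    (List.replicate t b).foldl f a = (fun v => f v b)^[t] a := by
  induction t generalizing a with
  | zero => rfl
  | succ t ih => rw [List.replicate_succ, List.foldl_cons, ih, Function.iterate_succ_apply]

theorem Ncoef_cons_replicate_one (m t : ℕ) : Ncoef (m :: List.replicate t 1) = 1 := by
  induction t generalizing m with
  | zero => simp [Ncoef]
  | succ t ih => rw [List.replicate_succ, Ncoef]; simp [ih]

theorem Ncoef_replicate_one (n : ℕ) : Ncoef (List.replicate n 1) = 1 := by
  cases n with
  | zero => simp [Ncoef]
  | succ n => exact Ncoef_cons_replicate_one 1 n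

section LieFold

variable {𝔤 : Type*} [LieRing 𝔤]

theorem foldl_lie_zero (X : ℕ → 𝔤) (l : List ℕ) :
    l.foldl (fun v i => ⁅X i, v⁆) (0 : 𝔤) = 0 := by
  induction l with
  | nil => rfl
  | cons b t ih => simpa using ih

theorem foldl_lie_eq_zero_of_mem {X : ℕ → 𝔤} {l : List ℕ} {i : ℕ} (hi : i ∈ l) (hX : X i = 0)
    (a : 𝔤) : l.foldl (fun v j => ⁅X j, v⁆) a = 0 := by
  induction l generalizing a with
  | nil => simp at hi
  | cons b t ih =>
    rcases List.mem_cons.mp hi with rfl | hi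
    · rw [List.foldl_cons, hX, zero_lie, foldl_lie_zero]
    · exact ih hi _

theorem foldl_dropLast_lie_eq_zero_of_mem {X Y : ℕ → 𝔤} {l : List ℕ} {i : ℕ} (hi : i ∈ l)
    (hX : X i = 0) (hY : Y i = 0) :
    l.dropLast.foldl (fun v j => ⁅X j, v⁆) (Y (l.getLast?.getD 0)) = 0 := by
  have hl : l ≠ [] := List.ne_nil_of_mem hi
  rw [← List.dropLast_append_getLast hl, List.mem_append, List.mem_singleton] at hi
  rcases hi with hi | rfl
  · exact foldl_lie_eq_zero_of_mem hi hX _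
  · rw [List.getLast?_eq_some_getLast hl, Option.getD_some, hY, foldl_lie_zero]

theorem jetZ_of_eq_zero_of_ne_one {x y : ℕ → 𝔤} (hx : ∀ m ≠ 1, x m = 0)
    (hy : ∀ m ≠ 1, y m = 0) {n : ℕ} (hn : 1 ≤ n) :
    jetZ x y n = x n + (fun v => ⁅x 1, v⁆)^[n - 1] (y 1) := by
  rw [jetZ, Finset.sum_eq_single (Composition.ones n)]
  · rw [Composition.ones_blocks, Ncoef_replicate_one, one_smul, List.dropLast_replicate,
      List.getLast?_replicate, if_neg (by omega), Option.getD_some,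
      List.foldl_replicate_eq_iterate]
  · intro c _ hc
    obtain ⟨i, hi, hi1⟩ := Composition.ne_ones_iff.mp hc
    rw [foldl_dropLast_lie_eq_zero_of_mem hi (hx i (by omega)) (hy i (by omega)), smul_zero]
  · exact fun h => (h (Finset.mem_univ _)).elim

end LieFold

theorem extX_pure {𝔤 : Type*} [LieRing 𝔤] {k : ℕ} (hk : 0 < k) (x : 𝔤) :
    extX k (fun j : Fin k => if j.val + 1 = 1 then x else 0) = fun m => if m = 1 then x else 0 := by
  funext m
  rcases eq_or_ne m 1 with rfl | hm
  · simp [extX, hk.ne']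
  · simp only [extX, hm, if_false, dite_eq_right_iff, ite_eq_right_iff]
    omega

theorem stmt7_general {𝔤 : Type*} [LieRing 𝔤]
    (k : ℕ) (x y : 𝔤) :
    jMul k (fun j : Fin k => if j.val + 1 = 1 then x else 0)
           (fun j : Fin k => if j.val + 1 = 1 then y else 0)
      = fun j : Fin k =>
          if j.val + 1 = 1 then x + y else (fun v => ⁅x, v⁆)^[j.val] y := by
  funext j
  rw [jMul, extX_pure j.pos, extX_pure j.pos,
    jetZ_of_eq_zero_of_ne_one (fun m hm => if_neg hm) (fun m hm => if_neg hm) (by omega)]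
  by_cases hj : j.val = 0 <;> simp [hj]

/-- the product of the pure elements `(x, 0, …, 0)` and `(y, 0, …, 0)`
in `J_k(𝔤)` is `(x + y, ad_x y, ad_x² y, …, ad_x^{k−1} y)`. -/
theorem stmt7 {R : Type*} [CommRing R] {𝔤 : Type*} [LieRing 𝔤] [LieAlgebra R 𝔤]
    (k : ℕ) (hk : 1 ≤ k) (x y : 𝔤) :
    jMul k (fun j : Fin k => if j.val + 1 = 1 then x else 0)
           (fun j : Fin k => if j.val + 1 = 1 then y else 0)
      = fun j : Fin k =>
          if j.val + 1 = 1 then x + y else (fun v => ⁅x, v⁆)^[j.val] y :=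
  stmt7_general k x y
end

section
/- In J_k(𝔤), let 1 < i ≤ k and x, y ∈ 𝔤, let a ∈ 𝔤^k be the pure element with x in slot 1 and 0 elsewhere, and let b be the pure element with y in slot i and 0 elsewhere. Then the product a·b has component x in slot 1, component C(i+m−1, m)·ad_x^m y in slot i + m for each 0 ≤ m ≤ k − i (in particular y in slot i), and 0 in every other slot, where C denotes the binomial coefficient. -/
/-!
In the product `a b`, the term of slot `n` indexed by a composition `(i₁, …, i_ℓ)` of `n` is
`N_{(i₁,…,i_ℓ)} ad_{a_{i_{ℓ-1}}} ⋯ ad_{a_{i₁}} b_{i_ℓ}`. Since `a` is concentrated in slot `1` and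
`b` in slot `i`, it vanishes unless `(i₁, …, i_ℓ) = (1, …, 1, i)`, which is a composition of `n`
only when `i ≤ n`; that term is `N_{(1,…,1,i)} ad_x^{n-i} y`, and the binomial factors of
`N_{(1,…,1,i)}` are all `1` except the last, `C(n-1, i-1)`.
-/

theorem Ncoef_cons_replicate_one_append (s m i : ℕ) :
    Ncoef (s :: (List.replicate m 1 ++ [i])) = (s + m + i - 1).choose (i - 1) := by
  induction m generalizing s with
  | zero => simp [Ncoef]
  | succ m ih =>
    rw [List.replicate_succ, List.cons_append, Ncoef, ih, Nat.sub_self, Nat.choose_zero_right,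
      one_mul, show s + 1 + m = s + (m + 1) by omega]

theorem Ncoef_replicate_one_append (m : ℕ) {i : ℕ} (hi : 0 < i) :
    Ncoef (List.replicate m 1 ++ [i]) = (m + i - 1).choose m := by
  cases m with
  | zero => simp [Ncoef]
  | succ m =>
    rw [List.replicate_succ, List.cons_append, Ncoef_cons_replicate_one_append,
      show 1 + m + i - 1 = (m + 1) + (i - 1) by omega, ← Nat.choose_symm_add,
      show m + 1 + i - 1 = (m + 1) + (i - 1) by omega]

def Composition.onesAppend {n i : ℕ} (hi : 0 < i) (hin : i ≤ n) : Composition n where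
  blocks := List.replicate (n - i) 1 ++ [i]
  blocks_pos := by
    intro j hj
    rcases List.mem_append.1 hj with h | h
    · rw [List.eq_of_mem_replicate h]; omega
    · rw [List.mem_singleton.1 h]; exact hi
  blocks_sum := by
    simp only [List.sum_append, List.sum_replicate, smul_eq_mul, mul_one, List.sum_singleton]
    omega

section Lie

variable {𝔤 : Type*} [LieRing 𝔤]

theorem foldl_lie_ite_one (x : 𝔤) (M : List ℕ) (v : 𝔤) :
    M.foldl (fun w j => ⁅if j = 1 then x else 0, w⁆) v
      = if ∀ j ∈ M, j = 1 then (fun w => ⁅x, w⁆)^[M.length] v else 0 := by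
  induction M generalizing v with
  | nil => simp
  | cons a M ih =>
    rw [List.foldl_cons, ih]
    by_cases ha : a = 1
    · simp [ha, Function.iterate_succ_apply]
    · simp [ha, Function.iterate_fixed (lie_zero x)]

theorem foldl_dropLast_lie_ite {n i : ℕ} (hi : 0 < i) (x y : 𝔤) (L : List ℕ) (hL : L.sum = n) :
    L.dropLast.foldl (fun w j => ⁅if j = 1 then x else 0, w⁆)
        (if L.getLast?.getD 0 = i then y else 0)
      = if L = List.replicate (n - i) 1 ++ [i] then (fun w => ⁅x, w⁆)^[n - i] y else 0 := by
  induction L using List.reverseRecOn with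
  | nil => simp [hi.ne]
  | append_singleton L a _ =>
    rw [List.dropLast_concat, List.getLast?_concat, Option.getD_some, foldl_lie_ite_one]
    by_cases hL1 : ∀ j ∈ L, j = 1
    · have hrep : L = List.replicate L.length 1 := List.eq_replicate_iff.2 ⟨rfl, hL1⟩
      have hlen : L.length + a = n := by
        rw [← hL, List.sum_append, hrep, List.sum_replicate]; simp
      by_cases ha : a = i
      · subst ha
        have hlen' : n - a = L.length := by omega
        rw [if_pos hL1, if_pos rfl, if_pos (by rw [hlen', ← hrep]), hlen']
      · have hne : L ++ [a] ≠ List.replicate (n - i) 1 ++ [i] := fun h =>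
          ha (List.singleton_inj.1 (List.append_inj' h rfl).2)
        rw [if_pos hL1, if_neg ha, if_neg hne, Function.iterate_fixed (lie_zero x)]
    · have hne : L ++ [a] ≠ List.replicate (n - i) 1 ++ [i] := fun h =>
        hL1 fun j hj => List.eq_of_mem_replicate ((List.append_inj' h rfl).1 ▸ hj)
      rw [if_neg hL1, if_neg hne]

theorem sum_compositions_lie_ite {i : ℕ} (hi : 0 < i) (x y : 𝔤) (n : ℕ) :
    ∑ c : Composition n, Ncoef c.blocks •
        c.blocks.dropLast.foldl (fun w j => ⁅if j = 1 then x else 0, w⁆)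
          (if c.blocks.getLast?.getD 0 = i then y else 0)
      = if i ≤ n then (n - 1).choose (n - i) • (fun w => ⁅x, w⁆)^[n - i] y else 0 := by
  rw [Finset.sum_congr rfl fun c _ => by rw [foldl_dropLast_lie_ite hi x y c.blocks c.blocks_sum]]
  simp only [smul_ite, smul_zero]
  split_ifs with hin
  · have hc (c : Composition n) :
        c.blocks = List.replicate (n - i) 1 ++ [i] ↔ c = Composition.onesAppend hi hin := by
      rw [Composition.ext_iff]; rfl
    simp only [hc, Fintype.sum_ite_eq']
    rw [Composition.onesAppend, Ncoef_replicate_one_append _ hi, show n - i + i - 1 = n - 1 by omega]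
  · refine Finset.sum_eq_zero fun c _ => if_neg fun h => hin ?_
    have hsum := c.blocks_sum
    rw [h, List.sum_append, List.sum_singleton] at hsum
    omega

theorem jetZ_congr_s8 {X X' Y Y' : ℕ → 𝔤} {n : ℕ} (hX : ∀ m ≤ n, X m = X' m)
    (hY : ∀ m ≤ n, Y m = Y' m) : jetZ X Y n = jetZ X' Y' n := by
  unfold jetZ
  rw [hX n le_rfl]
  refine congrArg _ (Finset.sum_congr rfl fun c _ => ?_)
  have hle : ∀ m ∈ c.blocks, m ≤ n := fun m hm => c.blocks_sum ▸ List.le_sum_of_mem hm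
  have hlast : c.blocks.getLast?.getD 0 ≤ n := by
    cases h : c.blocks.getLast? with
    | none => exact Nat.zero_le n
    | some a => exact hle a (List.mem_of_getLast? h)
  rw [hY _ hlast, List.foldl_ext _ _ _ fun v m hm => by
    rw [hX m (hle m (List.mem_of_mem_dropLast hm))]]

theorem jetZ_ite_one_ite {i : ℕ} (hi : 0 < i) (x y : 𝔤) (n : ℕ) :
    jetZ (fun m => if m = 1 then x else 0) (fun m => if m = i then y else 0) n
      = (if n = 1 then x else 0)
        + if i ≤ n then (n - 1).choose (n - i) • (fun w => ⁅x, w⁆)^[n - i] y else 0 := by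
  rw [jetZ, sum_compositions_lie_ite hi]

theorem extX_ite_eq {k p m : ℕ} (hp : 0 < p) (hm : m ≤ k) (v : 𝔤) :
    extX k (fun j : Fin k => if j.val + 1 = p then v else 0) m = if m = p then v else 0 := by
  simp only [extX]
  split_ifs <;> first | rfl | omega

end Lie

theorem stmt8_general {𝔤 : Type*} [LieRing 𝔤]
    (k : ℕ) (i : ℕ) (hi : 1 < i) (x y : 𝔤) :
    jMul k (fun j : Fin k => if j.val + 1 = 1 then x else 0)
           (fun j : Fin k => if j.val + 1 = i then y else 0)
      = fun j : Fin k =>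
          if j.val + 1 = 1 then x
          else if i ≤ j.val + 1 then
            Nat.choose j.val (j.val + 1 - i) • (fun v => ⁅x, v⁆)^[j.val + 1 - i] y
          else 0 := by
  funext j
  have hj : j.val + 1 ≤ k := j.isLt
  rw [jMul, jetZ_congr_s8 (fun m hm => extX_ite_eq one_pos (hm.trans hj) x)
    (fun m hm => extX_ite_eq (by omega) (hm.trans hj) y), jetZ_ite_one_ite (by omega)]
  split_ifs <;> first | omega | simp

/-- in `J_k(𝔤)`, for `1 < i ≤ k`, the product of the pure element with `x`
in slot `1` and the pure element with `y` in slot `i` has `x` in slot `1`,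
`C(i+m−1, m) • ad_x^m y` in slot `i + m` for `0 ≤ m ≤ k − i`, and `0` elsewhere.
(For a slot `n = j.val + 1` with `i ≤ n`, the corresponding `m` is `n − i`,
and `C(i+m−1, m) = C(n−1, n−i)`.) -/
theorem stmt8 {R : Type*} [CommRing R] {𝔤 : Type*} [LieRing 𝔤] [LieAlgebra R 𝔤]
    (k : ℕ) (hk : 1 ≤ k) (i : ℕ) (hi : 1 < i) (hik : i ≤ k) (x y : 𝔤) :
    jMul k (fun j : Fin k => if j.val + 1 = 1 then x else 0)
           (fun j : Fin k => if j.val + 1 = i then y else 0)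
      = fun j : Fin k =>
          if j.val + 1 = 1 then x
          else if i ≤ j.val + 1 then
            Nat.choose j.val (j.val + 1 - i) • (fun v => ⁅x, v⁆)^[j.val + 1 - i] y
          else 0 :=
  stmt8_general k i hi x y
end

section
/- Let k ≥ 2 and let 𝔥 = 𝔤^k with components indexed by 0, 1, …, k−1 carry the bracket [x, y]_n = Σ_{i+j=n, 0 ≤ i, j ≤ n} C(n, i)·[x_i, y_j] (this is the Lie algebra 𝔤 ⊗ R[X]/(X^k) in the divided-power basis, with x_0 playing the role of ξ). Define σ_k : 𝔥 × 𝔥 → 𝔤 by σ_k(x, y) = Σ_{i=1}^{k−1} C(k, i)·[x_i, y_{k−i}]. Then σ_k is an alternating bilinear map and is a Lie algebra 2-cocycle on 𝔥 with values in 𝔤 for the action x·v = [x_0, v]: for all x, y, z ∈ 𝔥, σ_k([x, y], z) + σ_k([y, z], x) + σ_k([z, x], y) = [x_0, σ_k(y, z)] + [y_0, σ_k(z, x)] + [z_0, σ_k(x, y)]. -/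
section TruncLie

variable {R : Type*} [CommRing R] {𝔤 : Type*} [LieRing 𝔤] [LieAlgebra R 𝔤]

/-- Extend an element of `𝔤^k` (components indexed `0, …, k−1`) to a function on `ℕ`,
by `0` outside `{0, …, k−1}`. -/
def ext0 (k : ℕ) (x : Fin k → 𝔤) : ℕ → 𝔤 :=
  fun n => if h : n < k then x ⟨n, h⟩ else 0

/-- The bracket on `𝔥 = 𝔤^k`: `[x, y]_n = Σ_{i+j=n} C(n, i)·[x_i, y_j]`
(the Lie algebra `𝔤 ⊗ R[X]/(X^k)` in the divided-power basis). -/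
def hBr (k : ℕ) (x y : Fin k → 𝔤) : Fin k → 𝔤 :=
  fun n => ∑ i ∈ Finset.range (n.val + 1),
    Nat.choose n.val i • ⁅ext0 k x i, ext0 k y (n.val - i)⁆

/-- The 2-cocycle `σ_k(x, y) = Σ_{i=1}^{k−1} C(k, i)·[x_i, y_{k−i}]`. -/
def sigmaK (k : ℕ) (x y : Fin k → 𝔤) : 𝔤 :=
  ∑ i ∈ Finset.Ico 1 k, Nat.choose k i • ⁅ext0 k x i, ext0 k y (k - i)⁆

end TruncLie

/-!
Viewing `x ∈ 𝔤^k` as a sequence that vanishes from index `k` on, `σ_k(x, y)` is the `k`-th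
component of the untruncated divided-power bracket of `x` and `y`, i.e. exactly the component
that the truncated bracket of `𝔥` discards. Accordingly, the `k`-th component of `[[x, y], z]`
computed without truncation is `σ_k([x, y], z) + [σ_k(x, y), z₀]`, and the cocycle identity is the
`k`-th component of the Jacobi identity for the untruncated bracket. That Jacobi identity holds
componentwise by induction on the index: by Pascal's rule the shift `n ↦ n + 1` is a derivation,
so the `(n+1)`-st component of a Jacobiator is a sum of three `n`-th components of Jacobiators.
-/

open Finset

section DividedPowerBracket

variable {L : Type*} [LieRing L]

/-- The untruncated version of `hBr`: the bracket of `L ⊗ R⟦X⟧` written in the divided-power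
basis `Xⁿ / n!`, on coefficient sequences. -/
def dpBracket (a b : ℕ → L) (n : ℕ) : L :=
  ∑ i ∈ range (n + 1), n.choose i • ⁅a i, b (n - i)⁆

@[simp]
lemma dpBracket_zero (a b : ℕ → L) : dpBracket a b 0 = ⁅a 0, b 0⁆ := by
  simp [dpBracket]

lemma dpBracket_add_left (a a' b : ℕ → L) (n : ℕ) :
    dpBracket (a + a') b n = dpBracket a b n + dpBracket a' b n := by
  simp [dpBracket, add_lie, smul_add, sum_add_distrib]

lemma dpBracket_add_right (a b b' : ℕ → L) (n : ℕ) :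
    dpBracket a (b + b') n = dpBracket a b n + dpBracket a b' n := by
  simp [dpBracket, lie_add, smul_add, sum_add_distrib]

lemma dpBracket_smul_left {R : Type*} [CommRing R] [LieAlgebra R L] (r : R) (a b : ℕ → L)
    (n : ℕ) : dpBracket (r • a) b n = r • dpBracket a b n := by
  simp [dpBracket, smul_sum, smul_comm r]

lemma dpBracket_smul_right {R : Type*} [CommRing R] [LieAlgebra R L] (r : R) (a b : ℕ → L)
    (n : ℕ) : dpBracket a (r • b) n = r • dpBracket a b n := by
  simp [dpBracket, smul_sum, smul_comm r]

lemma dpBracket_self (a : ℕ → L) (n : ℕ) : dpBracket a a n = 0 := by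
  refine sum_involution (fun i _ ↦ n - i) (fun i hi ↦ ?_) (fun i _ hne heq ↦ ?_)
    (fun i hi ↦ ?_) (fun i hi ↦ ?_)
  · have hin : i ≤ n := Nat.lt_succ_iff.mp (mem_range.mp hi)
    rw [Nat.choose_symm hin, Nat.sub_sub_self hin, ← smul_add, ← lie_skew, neg_add_cancel,
      smul_zero]
  · exact hne (by rw [heq, lie_self, smul_zero])
  · simp only [mem_range] at hi ⊢; omega
  · simp only [mem_range] at hi; omega

lemma dpBracket_succ (a b : ℕ → L) (n : ℕ) :
    dpBracket a b (n + 1) =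
      dpBracket a (fun m ↦ b (m + 1)) n + dpBracket (fun m ↦ a (m + 1)) b n := by
  rw [dpBracket, sum_choose_succ_nsmul (fun i j ↦ ⁅a i, b j⁆) n]
  congr 1
  refine sum_congr rfl fun i hi ↦ ?_
  rw [Nat.sub_add_comm (Nat.lt_succ_iff.mp (mem_range.mp hi))]

lemma dpBracket_shift (a b : ℕ → L) :
    (fun m ↦ dpBracket a b (m + 1)) =
      dpBracket a (fun m ↦ b (m + 1)) + dpBracket (fun m ↦ a (m + 1)) b :=
  funext (dpBracket_succ a b)

lemma dpBracket_jacobi (a b c : ℕ → L) (n : ℕ) :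
    dpBracket (dpBracket a b) c n + dpBracket (dpBracket b c) a n
      + dpBracket (dpBracket c a) b n = 0 := by
  induction n generalizing a b c with
  | zero =>
    simp only [dpBracket_zero]
    rw [← lie_skew ⁅a 0, b 0⁆, ← lie_skew ⁅b 0, c 0⁆, ← lie_skew ⁅c 0, a 0⁆]
    linear_combination (norm := abel) -lie_jacobi (a 0) (b 0) (c 0)
  | succ n ih =>
    rw [dpBracket_succ (dpBracket a b), dpBracket_succ (dpBracket b c),
      dpBracket_succ (dpBracket c a), dpBracket_shift, dpBracket_shift, dpBracket_shift,
      dpBracket_add_left, dpBracket_add_left, dpBracket_add_left]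
    linear_combination (norm := abel) ih a b (fun m ↦ c (m + 1))
      + ih a (fun m ↦ b (m + 1)) c + ih (fun m ↦ a (m + 1)) b c

end DividedPowerBracket

section Truncation

variable {𝔤 : Type*} [LieRing 𝔤] {k : ℕ}

lemma ext0_of_le (x : Fin k → 𝔤) {n : ℕ} (hn : k ≤ n) : ext0 k x n = 0 :=
  dif_neg (not_lt.mpr hn)

lemma ext0_smul_add {R : Type*} [CommRing R] [LieAlgebra R 𝔤] (r : R) (x x' : Fin k → 𝔤) :
    ext0 k (r • x + x') = r • ext0 k x + ext0 k x' := by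
  ext n
  by_cases hn : n < k <;> simp [ext0, hn]

lemma ext0_hBr (x y : Fin k → 𝔤) {n : ℕ} (hn : n < k) :
    ext0 k (hBr k x y) n = dpBracket (ext0 k x) (ext0 k y) n :=
  dif_pos hn

lemma sigmaK_eq_dpBracket (x y : Fin k → 𝔤) :
    sigmaK k x y = dpBracket (ext0 k x) (ext0 k y) k := by
  rw [sigmaK, dpBracket]
  refine sum_subset (fun i hi ↦ mem_range.mpr (by simp only [mem_Ico] at hi; omega))
    fun i hi hi' ↦ ?_
  obtain rfl | rfl : i = 0 ∨ i = k := by simp only [mem_range, mem_Ico] at hi hi'; omega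
  · rw [Nat.sub_zero, ext0_of_le y le_rfl, lie_zero, smul_zero]
  · rw [ext0_of_le x le_rfl, zero_lie, smul_zero]

lemma sigmaK_hBr_add_lie (x y z : Fin k → 𝔤) :
    sigmaK k (hBr k x y) z + ⁅sigmaK k x y, ext0 k z 0⁆ =
      dpBracket (dpBracket (ext0 k x) (ext0 k y)) (ext0 k z) k := by
  rw [sigmaK_eq_dpBracket, sigmaK_eq_dpBracket, dpBracket.eq_1 (ext0 k _),
    dpBracket.eq_1 (dpBracket _ _), sum_range_succ, sum_range_succ, ext0_of_le _ le_rfl, zero_lie,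
    smul_zero, add_zero, Nat.choose_self, one_smul, Nat.sub_self]
  congr 1
  refine sum_congr rfl fun i hi ↦ ?_
  rw [ext0_hBr x y (mem_range.mp hi)]

end Truncation

theorem stmt12_general {R : Type*} [CommRing R] {𝔤 : Type*} [LieRing 𝔤] [LieAlgebra R 𝔤]
    (k : ℕ) :
    (∀ x : Fin k → 𝔤, sigmaK k x x = 0) ∧
    (∀ (r : R) (x x' y : Fin k → 𝔤),
      sigmaK k (r • x + x') y = r • sigmaK k x y + sigmaK k x' y) ∧
    (∀ (r : R) (x y y' : Fin k → 𝔤),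
      sigmaK k x (r • y + y') = r • sigmaK k x y + sigmaK k x y') ∧
    (∀ x y z : Fin k → 𝔤,
      sigmaK k (hBr k x y) z + sigmaK k (hBr k y z) x + sigmaK k (hBr k z x) y
        = ⁅ext0 k x 0, sigmaK k y z⁆ + ⁅ext0 k y 0, sigmaK k z x⁆
          + ⁅ext0 k z 0, sigmaK k x y⁆) := by
  refine ⟨fun x ↦ ?_, fun r x x' y ↦ ?_, fun r x y y' ↦ ?_, fun x y z ↦ ?_⟩
  · rw [sigmaK_eq_dpBracket, dpBracket_self]
  · simp only [sigmaK_eq_dpBracket, ext0_smul_add, dpBracket_add_left, dpBracket_smul_left]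
  · simp only [sigmaK_eq_dpBracket, ext0_smul_add, dpBracket_add_right, dpBracket_smul_right]
  · have jacobi := dpBracket_jacobi (ext0 k x) (ext0 k y) (ext0 k z) k
    rw [← sigmaK_hBr_add_lie, ← sigmaK_hBr_add_lie, ← sigmaK_hBr_add_lie] at jacobi
    rw [← lie_skew (ext0 k x 0), ← lie_skew (ext0 k y 0), ← lie_skew (ext0 k z 0)]
    linear_combination (norm := abel) jacobi

/-- `σ_k` is an alternating bilinear map, and a Lie algebra 2-cocycle on
`𝔥 = 𝔤^k` (with the bracket `[x,y]_n = Σ_{i+j=n} C(n,i)·[x_i,y_j]`) with values in `𝔤`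
for the action `x·v = [x_0, v]`. -/
theorem stmt12 {R : Type*} [CommRing R] {𝔤 : Type*} [LieRing 𝔤] [LieAlgebra R 𝔤]
    (k : ℕ) (hk : 2 ≤ k) :
    (∀ x : Fin k → 𝔤, sigmaK k x x = 0) ∧
    (∀ (r : R) (x x' y : Fin k → 𝔤),
      sigmaK k (r • x + x') y = r • sigmaK k x y + sigmaK k x' y) ∧
    (∀ (r : R) (x y y' : Fin k → 𝔤),
      sigmaK k x (r • y + y') = r • sigmaK k x y + sigmaK k x y') ∧
    (∀ x y z : Fin k → 𝔤,
      sigmaK k (hBr k x y) z + sigmaK k (hBr k y z) x + sigmaK k (hBr k z x) y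
        = ⁅ext0 k x 0, sigmaK k y z⁆ + ⁅ext0 k y 0, sigmaK k z x⁆
          + ⁅ext0 k z 0, sigmaK k x y⁆) :=
  stmt12_general k
end
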